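/- Let C be a semidualizing (S,R)-bimodule and (M, N) a duality pair over R. Then the functor C ⊗_R − restricts to an equivalence of categories from A_C(R) ∩ M to M^C(S), with quasi-inverse Hom_S(C, −); similarly − ⊗_S C restricts to an equivalence from N^C(S^op) to B_C(R^op) ∩ N with quasi-inverse Hom_{R^op}(C, −). -/

import Mathlib

set_option linter.unusedVariables false
set_option linter.unusedSectionVars false

open MulOpposite CategoryTheory

open MulOpposite

noncomputable section

section BT
variable (R : Type) [Ring R] (M : Type) [AddCommGroup M] [Module Rᵐᵒᵖ M]
  (N : Type) [AddCommGroup N] [Module R N]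

def btRel : Submodule ℤ (TensorProduct ℤ M N) :=
  Submodule.span ℤ {x | ∃ (m : M) (r : R) (n : N),
    x = (op r • m) ⊗ₜ[ℤ] n - m ⊗ₜ[ℤ] (r • n)}

def BT : Type := TensorProduct ℤ M N ⧸ btRel R M N

instance : AddCommGroup (BT R M N) :=
  inferInstanceAs (AddCommGroup (TensorProduct ℤ M N ⧸ btRel R M N))

variable {M N}

def BT.mk (m : M) (n : N) : BT R M N :=
  Submodule.Quotient.mk (m ⊗ₜ[ℤ] n)

variable {R}

theorem BT.mk_rel (m : M) (r : R) (n : N) : BT.mk R (op r • m) n = BT.mk R m (r • n) := by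
  exact (Submodule.Quotient.eq (btRel R M N)).2 (Submodule.subset_span ⟨m, r, n, rfl⟩)

theorem BT.mk_add_left (m m' : M) (n : N) :
    BT.mk R (m + m') n = BT.mk R m n + BT.mk R m' n := by
  unfold BT.mk; rw [TensorProduct.add_tmul]; exact Submodule.Quotient.mk_add _

theorem BT.mk_add_right (m : M) (n n' : N) :
    BT.mk R m (n + n') = BT.mk R m n + BT.mk R m n' := by
  unfold BT.mk; rw [TensorProduct.tmul_add]; exact Submodule.Quotient.mk_add _

theorem BT.mk_zero_left (n : N) : BT.mk R (0 : M) n = 0 := by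
  rw [BT.mk, TensorProduct.zero_tmul]; rfl

theorem BT.mk_zero_right (m : M) : BT.mk R m (0 : N) = 0 := by
  rw [BT.mk, TensorProduct.tmul_zero]; rfl

theorem BT.ind {P : BT R M N → Prop} (h0 : P 0) (hmk : ∀ m n, P (BT.mk R m n))
    (hadd : ∀ x y, P x → P y → P (x + y)) : ∀ x, P x := by
  intro x
  obtain ⟨y, rfl⟩ := Submodule.Quotient.mk_surjective (btRel R M N) x
  induction y using TensorProduct.induction_on with
  | zero => exact h0
  | tmul m n => exact hmk m n
  | add a b ha hb => rw [Submodule.Quotient.mk_add]; exact hadd _ _ ha hb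

theorem BT.hom_ext {X : Type} [AddCommGroup X] {f g : BT R M N →ₗ[ℤ] X}
    (h : ∀ m n, f (BT.mk R m n) = g (BT.mk R m n)) : f = g :=
  LinearMap.ext fun x => BT.ind (P := fun y => f y = g y) (by simp) h
    (fun a b ha hb => by
      show f (a + b) = g (a + b)
      rw [map_add, map_add]
      exact congrArg₂ (· + ·) ha hb) x

/-- Functoriality of the balanced tensor product in the right variable. -/
def BT.map (R : Type) [Ring R] {M : Type} [AddCommGroup M] [Module Rᵐᵒᵖ M]
    {N N' : Type} [AddCommGroup N] [Module R N] [AddCommGroup N'] [Module R N']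
    (f : N →ₗ[R] N') : BT R M N →ₗ[ℤ] BT R M N' := by
  refine Submodule.mapQ _ _
    (TensorProduct.map LinearMap.id f.toAddMonoidHom.toIntLinearMap) ?_
  rw [btRel, Submodule.span_le]
  rintro x ⟨m, r, n, rfl⟩
  have e : TensorProduct.map LinearMap.id f.toAddMonoidHom.toIntLinearMap ((op r • m) ⊗ₜ[ℤ] n - m ⊗ₜ[ℤ] (r • n)) =
      (op r • m) ⊗ₜ[ℤ] f n - m ⊗ₜ[ℤ] (r • f n) := by
    simp [smul_comm]
  exact (congrArg (· ∈ btRel R M N') e).mpr (Submodule.subset_span ⟨m, r, f n, rfl⟩)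

@[simp] theorem BT.map_mk (R : Type) [Ring R] {M : Type} [AddCommGroup M] [Module Rᵐᵒᵖ M]
    {N N' : Type} [AddCommGroup N] [Module R N] [AddCommGroup N'] [Module R N']
    (f : N →ₗ[R] N') (m : M) (n : N) : BT.map R f (BT.mk R m n) = BT.mk R m (f n) := rfl

section lsmul
variable (T : Type) [Ring T] [Module T M] [SMulCommClass T Rᵐᵒᵖ M]

/-- action of an auxiliary ring `T` on `M ⊗_R N` through the left factor. -/
def BT.lsmul (t : T) : BT R M N →ₗ[ℤ] BT R M N := by
  refine Submodule.mapQ _ _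
    (TensorProduct.map (DistribMulAction.toAddMonoidHom M t).toIntLinearMap LinearMap.id) ?_
  rw [btRel, Submodule.span_le]
  rintro x ⟨m, r, n, rfl⟩
  have e : TensorProduct.map (DistribMulAction.toAddMonoidHom M t).toIntLinearMap LinearMap.id ((op r • m) ⊗ₜ[ℤ] n - m ⊗ₜ[ℤ] (r • n)) =
      (op r • t • m) ⊗ₜ[ℤ] n - (t • m) ⊗ₜ[ℤ] (r • n) := by
    simp [smul_comm]
  exact (congrArg (· ∈ btRel R M N) e).mpr (Submodule.subset_span ⟨t • m, r, n, rfl⟩)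

@[simp] theorem BT.lsmul_mk (t : T) (m : M) (n : N) :
    BT.lsmul T t (BT.mk R m n) = BT.mk R (t • m) n := rfl

theorem BT.lsmul_one : BT.lsmul (R := R) (M := M) (N := N) T 1 = LinearMap.id :=
  BT.hom_ext fun m n => by simp

theorem BT.lsmul_mul (t t' : T) :
    BT.lsmul (R := R) (M := M) (N := N) T (t * t') = (BT.lsmul T t).comp (BT.lsmul T t') :=
  BT.hom_ext fun m n => by simp [mul_smul]

theorem BT.lsmul_add (t t' : T) :
    BT.lsmul (R := R) (M := M) (N := N) T (t + t') = BT.lsmul T t + BT.lsmul T t' :=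
  BT.hom_ext fun m n => by simp [add_smul, BT.mk_add_left]

theorem BT.lsmul_zero : BT.lsmul (R := R) (M := M) (N := N) T 0 = 0 :=
  BT.hom_ext fun m n => by simp [BT.mk_zero_left]

/-- The left auxiliary module structure on the balanced tensor product. -/
instance (priority := 100) BT.instLModule : Module T (BT R M N) where
  smul t x := BT.lsmul T t x
  one_smul x := by show BT.lsmul T 1 x = x; rw [BT.lsmul_one]; rfl
  mul_smul t t' x := by
    show BT.lsmul T (t * t') x = BT.lsmul T t (BT.lsmul T t' x)
    rw [BT.lsmul_mul]; rfl
  smul_zero t := map_zero (BT.lsmul T t)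
  smul_add t x y := map_add (BT.lsmul T t) x y
  add_smul t t' x := by
    show BT.lsmul T (t + t') x = BT.lsmul T t x + BT.lsmul T t' x
    rw [BT.lsmul_add]; rfl
  zero_smul x := by show BT.lsmul T 0 x = 0; rw [BT.lsmul_zero]; rfl

theorem BT.smul_mk (t : T) (m : M) (n : N) :
    t • (BT.mk R m n) = BT.mk R (t • m) n := BT.lsmul_mk T t m n

end lsmul

section rsmul
variable (T : Type) [Ring T] [Module T N] [SMulCommClass T R N]

/-- action of an auxiliary ring `T` on `M ⊗_R N` through the right factor. -/
def BT.rsmul (t : T) : BT R M N →ₗ[ℤ] BT R M N := by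
  refine Submodule.mapQ _ _
    (TensorProduct.map LinearMap.id (DistribMulAction.toAddMonoidHom N t).toIntLinearMap) ?_
  rw [btRel, Submodule.span_le]
  rintro x ⟨m, r, n, rfl⟩
  have e : TensorProduct.map LinearMap.id (DistribMulAction.toAddMonoidHom N t).toIntLinearMap ((op r • m) ⊗ₜ[ℤ] n - m ⊗ₜ[ℤ] (r • n)) =
      (op r • m) ⊗ₜ[ℤ] (t • n) - m ⊗ₜ[ℤ] (r • t • n) := by
    simp [smul_comm]
  exact (congrArg (· ∈ btRel R M N) e).mpr (Submodule.subset_span ⟨m, r, t • n, rfl⟩)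

@[simp] theorem BT.rsmul_mk (t : T) (m : M) (n : N) :
    BT.rsmul T t (BT.mk R m n) = BT.mk R m (t • n) := rfl

theorem BT.rsmul_one : BT.rsmul (R := R) (M := M) (N := N) T 1 = LinearMap.id :=
  BT.hom_ext fun m n => by simp

theorem BT.rsmul_mul (t t' : T) :
    BT.rsmul (R := R) (M := M) (N := N) T (t * t') = (BT.rsmul T t).comp (BT.rsmul T t') :=
  BT.hom_ext fun m n => by simp [mul_smul]

theorem BT.rsmul_add (t t' : T) :
    BT.rsmul (R := R) (M := M) (N := N) T (t + t') = BT.rsmul T t + BT.rsmul T t' :=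
  BT.hom_ext fun m n => by simp [add_smul, BT.mk_add_right]

theorem BT.rsmul_zero : BT.rsmul (R := R) (M := M) (N := N) T 0 = 0 :=
  BT.hom_ext fun m n => by simp [BT.mk_zero_right]

/-- The right auxiliary module structure on the balanced tensor product. -/
instance (priority := 90) BT.instRModule : Module T (BT R M N) where
  smul t x := BT.rsmul T t x
  one_smul x := by show BT.rsmul T 1 x = x; rw [BT.rsmul_one]; rfl
  mul_smul t t' x := by
    show BT.rsmul T (t * t') x = BT.rsmul T t (BT.rsmul T t' x)
    rw [BT.rsmul_mul]; rfl
  smul_zero t := map_zero (BT.rsmul T t)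
  smul_add t x y := map_add (BT.rsmul T t) x y
  add_smul t t' x := by
    show BT.rsmul T (t + t') x = BT.rsmul T t x + BT.rsmul T t' x
    rw [BT.rsmul_add]; rfl
  zero_smul x := by show BT.rsmul T 0 x = 0; rw [BT.rsmul_zero]; rfl

theorem BT.smul_mk_right (t : T) (m : M) (n : N) :
    t • (BT.mk R m n) = BT.mk R m (t • n) := BT.rsmul_mk T t m n

end rsmul
end BT
end


noncomputable section

set_option linter.unusedSectionVars false

/-! ### Hom-module structures -/

section HomMod
variable (R S : Type) [Ring R] [Ring S]
variable (C : Type) [AddCommGroup C] [Module S C] [Module Rᵐᵒᵖ C] [SMulCommClass S Rᵐᵒᵖ C]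

/-- For an `(S,R)`-bimodule `C` and a left `S`-module `X`, the abelian group
`Hom_S(C,X)` is a left `R`-module via `(r • f) c = f (c • r)`. -/
instance homLeftModule (X : Type) [AddCommGroup X] [Module S X] :
    Module R (C →ₗ[S] X) where
  smul r f :=
    { toFun := fun c => f (op r • c)
      map_add' := fun c c' => by
        show f (op r • (c + c')) = f (op r • c) + f (op r • c')
        rw [smul_add, map_add]
      map_smul' := fun s c => by
        show f (op r • s • c) = s • f (op r • c)
        rw [← smul_comm s (op r) c, map_smul] }
  one_smul f := LinearMap.ext fun c => by
    show f (op (1 : R) • c) = f c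
    rw [op_one, one_smul]
  mul_smul r r' f := LinearMap.ext fun c => by
    show f (op (r * r') • c) = f (op r' • op r • c)
    rw [← mul_smul, ← op_mul]
  smul_add r f g := rfl
  smul_zero r := rfl
  add_smul r r' f := LinearMap.ext fun c => by
    show f (op (r + r') • c) = f (op r • c) + f (op r' • c)
    rw [← map_add, MulOpposite.op_add, add_smul]
  zero_smul f := LinearMap.ext fun c => by
    show f (op (0 : R) • c) = 0
    rw [op_zero, zero_smul, map_zero]

theorem homLeftModule_smul_apply (X : Type) [AddCommGroup X] [Module S X]
    (r : R) (f : C →ₗ[S] X) (c : C) : (r • f) c = f (op r • c) := rfl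

/-- For an `(S,R)`-bimodule `C` and a right `R`-module `Y`, the abelian group
`Hom_{Rᵒᵖ}(C,Y)` is a right `S`-module via `(f • s) c = f (s • c)`. -/
instance homRightModule (Y : Type) [AddCommGroup Y] [Module Rᵐᵒᵖ Y] :
    Module Sᵐᵒᵖ (C →ₗ[Rᵐᵒᵖ] Y) where
  smul s f :=
    { toFun := fun c => f (s.unop • c)
      map_add' := fun c c' => by
        show f (s.unop • (c + c')) = f (s.unop • c) + f (s.unop • c')
        rw [smul_add, map_add]
      map_smul' := fun r c => by
        show f (s.unop • r • c) = r • f (s.unop • c)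
        rw [smul_comm s.unop r c, map_smul] }
  one_smul f := LinearMap.ext fun c => by
    show f ((1 : Sᵐᵒᵖ).unop • c) = f c
    rw [unop_one, one_smul]
  mul_smul s s' f := LinearMap.ext fun c => by
    show f ((s * s').unop • c) = f (s'.unop • s.unop • c)
    rw [unop_mul, mul_smul]
  smul_add s f g := rfl
  smul_zero s := rfl
  add_smul s s' f := LinearMap.ext fun c => by
    show f ((s + s').unop • c) = f (s.unop • c) + f (s'.unop • c)
    rw [← map_add, MulOpposite.unop_add, add_smul]
  zero_smul f := LinearMap.ext fun c => by
    show f ((0 : Sᵐᵒᵖ).unop • c) = 0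
    rw [unop_zero, zero_smul, map_zero]

theorem homRightModule_smul_apply (Y : Type) [AddCommGroup Y] [Module Rᵐᵒᵖ Y]
    (s : Sᵐᵒᵖ) (f : C →ₗ[Rᵐᵒᵖ] Y) (c : C) : (s • f) c = f (s.unop • c) := rfl

end HomMod

/-! ### Character modules of one-sided modules -/

section Char
variable (R : Type) [Ring R] (M : Type) [AddCommGroup M]

/-- The character module of a left module is a right module. -/
instance instCharRight [Module R M] : Module Rᵐᵒᵖ (CharacterModule M) where
  smul r f := f.comp (DistribMulAction.toAddMonoidHom M r.unop)
  one_smul f := DFunLike.ext _ _ fun a => by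
    show f ((1 : Rᵐᵒᵖ).unop • a) = f a
    rw [unop_one, one_smul]
  mul_smul r r' f := DFunLike.ext _ _ fun a => by
    show f ((r * r').unop • a) = f (r'.unop • r.unop • a)
    rw [unop_mul, mul_smul]
  smul_add r f g := rfl
  smul_zero r := rfl
  add_smul r r' f := DFunLike.ext _ _ fun a => by
    show f ((r + r').unop • a) = f (r.unop • a) + f (r'.unop • a)
    rw [← map_add, MulOpposite.unop_add, add_smul]
  zero_smul f := DFunLike.ext _ _ fun a => by
    show f ((0 : Rᵐᵒᵖ).unop • a) = 0
    rw [unop_zero, zero_smul, map_zero]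

theorem instCharRight_smul_apply [Module R M] (r : Rᵐᵒᵖ) (f : CharacterModule M) (a : M) :
    (r • f) a = f (r.unop • a) := rfl

/-- The character module of a right module is a left module. -/
instance instCharLeft [Module Rᵐᵒᵖ M] : Module R (CharacterModule M) where
  smul r f := f.comp (DistribMulAction.toAddMonoidHom M (op r))
  one_smul f := DFunLike.ext _ _ fun a => by
    show f (op (1 : R) • a) = f a
    rw [op_one, one_smul]
  mul_smul r r' f := DFunLike.ext _ _ fun a => by
    show f (op (r * r') • a) = f (op r' • op r • a)
    rw [← mul_smul, ← op_mul]
  smul_add r f g := rfl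
  smul_zero r := rfl
  add_smul r r' f := DFunLike.ext _ _ fun a => by
    show f (op (r + r') • a) = f (op r • a) + f (op r' • a)
    rw [← map_add, MulOpposite.op_add, add_smul]
  zero_smul f := DFunLike.ext _ _ fun a => by
    show f (op (0 : R) • a) = 0
    rw [op_zero, zero_smul, map_zero]

theorem instCharLeft_smul_apply [Module Rᵐᵒᵖ M] (r : R) (f : CharacterModule M) (a : M) :
    (r • f) a = f (op r • a) := rfl

end Char
end

noncomputable section
section TorExt

/-- Tensoring with a fixed right `R`-module `M`, as a functor on left `R`-modules. -/
def btF (R : Type) [Ring R] (M : Type) [AddCommGroup M] [Module Rᵐᵒᵖ M] :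
    ModuleCat.{0} R ⥤ AddCommGrpCat.{0} where
  obj N := AddCommGrpCat.of (BT R M N)
  map f := AddCommGrpCat.ofHom (BT.map R f.hom).toAddMonoidHom
  map_id N := by
    have h : BT.map (M := M) R (LinearMap.id : ↥N →ₗ[R] ↥N) = LinearMap.id :=
      BT.hom_ext fun m n => by simp
    ext x
    show BT.map (M := M) R (LinearMap.id : ↥N →ₗ[R] ↥N) x = x
    rw [h]; rfl
  map_comp {X Y Z} f g := by
    have h : BT.map (M := M) R (LinearMap.comp g.hom f.hom)
        = (BT.map R g.hom).comp (BT.map R f.hom) :=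
      BT.hom_ext fun m n => by simp
    ext x
    show BT.map (M := M) R (LinearMap.comp g.hom f.hom) x
      = BT.map R g.hom (BT.map R f.hom x)
    rw [h]; rfl

instance btF_additive (R : Type) [Ring R] (M : Type) [AddCommGroup M] [Module Rᵐᵒᵖ M] :
    (btF R M).Additive where
  map_add := by
    intro N N' f g
    have h : BT.map (M := M) R (f + g).hom
        = BT.map R f.hom + BT.map R g.hom :=
      BT.hom_ext fun m n => by
        rw [show BT.map R (f + g).hom (BT.mk R m n)
            = BT.mk R m (f.hom n + g.hom n) from rfl, BT.mk_add_right]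
        rfl
    ext x
    show BT.map (M := M) R (f + g).hom x
      = BT.map R f.hom x + BT.map R g.hom x
    rw [h]; rfl

/-- `Tor_i^R(M, N)` for a right `R`-module `M` and a left `R`-module `N`,
computed as the `i`-th left derived functor of `M ⊗_R -`. -/
def TorGrp (R : Type) [Ring R] (M : Type) [AddCommGroup M] [Module Rᵐᵒᵖ M]
    (N : Type) [AddCommGroup N] [Module R N] (i : ℕ) : Type :=
  ((btF R M).leftDerived i).obj (ModuleCat.of R N)

instance (R : Type) [Ring R] (M : Type) [AddCommGroup M] [Module Rᵐᵒᵖ M]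
    (N : Type) [AddCommGroup N] [Module R N] (i : ℕ) : AddCommGroup (TorGrp R M N i) :=
  inferInstanceAs (AddCommGroup ↑(((btF R M).leftDerived i).obj (ModuleCat.of R N)))

/-- `Ext^i_R(A, B)`, computed by deriving `Hom_R(-, B)` using projective resolutions. -/
def ExtGrp (R : Type) [Ring R] (A : Type) [AddCommGroup A] [Module R A]
    (B : Type) [AddCommGroup B] [Module R B] (i : ℕ) : Type :=
  ((Ext ℤ (ModuleCat.{0} R) i).obj (Opposite.op (ModuleCat.of R A))).obj (ModuleCat.of R B)

instance (R : Type) [Ring R] (A : Type) [AddCommGroup A] [Module R A]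
    (B : Type) [AddCommGroup B] [Module R B] (i : ℕ) : AddCommGroup (ExtGrp R A B i) :=
  inferInstanceAs (AddCommGroup
    ↑(((Ext ℤ (ModuleCat.{0} R) i).obj (Opposite.op (ModuleCat.of R A))).obj (ModuleCat.of R B)))

end TorExt

end

noncomputable section
section Semidualizing
variable (R S : Type) [Ring R] [Ring S]
variable (C : Type) [AddCommGroup C] [Module S C] [Module Rᵐᵒᵖ C]
  [SMulCommClass S Rᵐᵒᵖ C] [SMulCommClass Rᵐᵒᵖ S C]

/-- The natural map `A → Hom_S(C, C ⊗_R A)`. -/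
def muR (A : Type) [AddCommGroup A] [Module R A] : A → (C →ₗ[S] BT R C A) :=
  fun a =>
  { toFun := fun c => BT.mk R c a
    map_add' := fun c c' => BT.mk_add_left c c' a
    map_smul' := fun s c => (BT.smul_mk S s c a).symm }

/-- The auxiliary evaluation on the plain tensor product. -/
def nuSAux (X : Type) [AddCommGroup X] [Module S X] :
    TensorProduct ℤ C (C →ₗ[S] X) →ₗ[ℤ] X :=
  TensorProduct.lift (LinearMap.mk₂ ℤ (fun c (f : C →ₗ[S] X) => f c)
    (fun c c' f => map_add f c c')
    (fun z c f => map_zsmul f z c)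
    (fun c f g => rfl)
    (fun z c f => rfl))

/-- The natural evaluation map `C ⊗_R Hom_S(C, X) → X`. -/
def nuS (X : Type) [AddCommGroup X] [Module S X] : BT R C (C →ₗ[S] X) → X :=
  fun x => Submodule.liftQ (btRel R C (C →ₗ[S] X)) (nuSAux S C X) (by
    rw [btRel, Submodule.span_le]
    rintro y ⟨c, r, f, rfl⟩
    simp only [SetLike.mem_coe, LinearMap.mem_ker, map_sub]
    have h1 : nuSAux S C X ((op r • c) ⊗ₜ[ℤ] f) = f (op r • c) := rfl
    have h2 : nuSAux S C X (c ⊗ₜ[ℤ] (r • f)) = f (op r • c) := rfl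
    rw [h1, h2, sub_self]) x

/-- The natural map `Y → Hom_{Rᵒᵖ}(C, Y ⊗_S C)`. -/
def muOp (Y : Type) [AddCommGroup Y] [Module Sᵐᵒᵖ Y] : Y → (C →ₗ[Rᵐᵒᵖ] BT S Y C) :=
  fun y =>
  { toFun := fun c => BT.mk S y c
    map_add' := fun c c' => BT.mk_add_right y c c'
    map_smul' := fun r c => (BT.smul_mk_right Rᵐᵒᵖ r y c).symm }

/-- The auxiliary evaluation on the plain tensor product, opposite side. -/
def nuOpAux (B : Type) [AddCommGroup B] [Module Rᵐᵒᵖ B] :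
    TensorProduct ℤ (C →ₗ[Rᵐᵒᵖ] B) C →ₗ[ℤ] B :=
  TensorProduct.lift (LinearMap.mk₂ ℤ (fun (f : C →ₗ[Rᵐᵒᵖ] B) c => f c)
    (fun f g c => rfl)
    (fun z f c => rfl)
    (fun f c c' => map_add f c c')
    (fun z f c => map_zsmul f z c))

/-- The natural evaluation map `Hom_{Rᵒᵖ}(C, B) ⊗_S C → B`. -/
def nuOp (B : Type) [AddCommGroup B] [Module Rᵐᵒᵖ B] : BT S (C →ₗ[Rᵐᵒᵖ] B) C → B :=
  fun x => Submodule.liftQ (btRel S (C →ₗ[Rᵐᵒᵖ] B) C) (nuOpAux R C B) (by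
    rw [btRel, Submodule.span_le]
    rintro y ⟨f, s, c, rfl⟩
    simp only [SetLike.mem_coe, LinearMap.mem_ker, map_sub]
    have h1 : nuOpAux R C B ((op s • f) ⊗ₜ[ℤ] c) = f (s • c) := rfl
    have h2 : nuOpAux R C B (f ⊗ₜ[ℤ] (s • c)) = f (s • c) := rfl
    rw [h1, h2, sub_self]) x

/-- The Auslander class `A_C(R)`. -/
def AuslanderR (A : Type) [AddCommGroup A] [Module R A] : Prop :=
  (∀ i : ℕ, 1 ≤ i → Subsingleton (TorGrp R C A i)) ∧
  (∀ i : ℕ, 1 ≤ i → Subsingleton (ExtGrp S C (BT R C A) i)) ∧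
  Function.Bijective (muR R S C A)

/-- The Bass class `B_C(S)`. -/
def BassS (X : Type) [AddCommGroup X] [Module S X] : Prop :=
  (∀ i : ℕ, 1 ≤ i → Subsingleton (ExtGrp S C X i)) ∧
  (∀ i : ℕ, 1 ≤ i → Subsingleton (TorGrp R C (C →ₗ[S] X) i)) ∧
  Function.Bijective (nuS R S C X)

/-- The Auslander class `A_C(Sᵒᵖ)`. -/
def AuslanderOp (Y : Type) [AddCommGroup Y] [Module Sᵐᵒᵖ Y] : Prop :=
  (∀ i : ℕ, 1 ≤ i → Subsingleton (TorGrp S Y C i)) ∧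
  (∀ i : ℕ, 1 ≤ i → Subsingleton (ExtGrp Rᵐᵒᵖ C (BT S Y C) i)) ∧
  Function.Bijective (muOp R S C Y)

/-- The Bass class `B_C(Rᵒᵖ)`. -/
def BassOp (B : Type) [AddCommGroup B] [Module Rᵐᵒᵖ B] : Prop :=
  (∀ i : ℕ, 1 ≤ i → Subsingleton (ExtGrp Rᵐᵒᵖ C B i)) ∧
  (∀ i : ℕ, 1 ≤ i → Subsingleton (TorGrp S (C →ₗ[Rᵐᵒᵖ] B) C i)) ∧
  Function.Bijective (nuOp R S C B)

/-- `M` is of type `FP∞`: it admits a projective resolution by finitely generated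
free modules. -/
def IsFPInfty (A : Type) [Ring A] (M : Type) [AddCommGroup M] [Module A M] : Prop :=
  ∃ P : CategoryTheory.ProjectiveResolution (ModuleCat.of A M),
    ∀ n : ℕ, Module.Finite A (P.complex.X n) ∧ Module.Free A (P.complex.X n)

/-- The homothety map `S → Hom_{Rᵒᵖ}(C, C)`. -/
def homothetyS : S → (C →ₗ[Rᵐᵒᵖ] C) := fun s =>
  { toFun := fun c => s • c
    map_add' := fun c c' => smul_add s c c'
    map_smul' := fun r c => by
      show s • (r • c) = r • (s • c)
      rw [smul_comm] }

/-- The homothety map `R → Hom_S(C, C)`. -/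
def homothetyR : R → (C →ₗ[S] C) := fun r =>
  { toFun := fun c => op r • c
    map_add' := fun c c' => smul_add (op r) c c'
    map_smul' := fun s c => by
      show op r • (s • c) = s • (op r • c)
      rw [smul_comm] }

/-- `C` is a semidualizing `(S,R)`-bimodule. -/
structure IsSemidualizing : Prop where
  fp_left : IsFPInfty S C
  fp_right : IsFPInfty Rᵐᵒᵖ C
  homothety_S : Function.Bijective (homothetyS R S C)
  homothety_R : Function.Bijective (homothetyR R S C)
  ext_S : ∀ i : ℕ, 1 ≤ i → Subsingleton (ExtGrp S C C i)
  ext_R : ∀ i : ℕ, 1 ≤ i → Subsingleton (ExtGrp Rᵐᵒᵖ C C i)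

/-- `C` is faithfully semidualizing. -/
structure IsFaithfullySemidualizing extends IsSemidualizing R S C : Prop where
  faithful_S : ∀ (X : Type) [AddCommGroup X] [Module S X],
    (∀ f : C →ₗ[S] X, f = 0) → Subsingleton X
  faithful_R : ∀ (Y : Type) [AddCommGroup Y] [Module Rᵐᵒᵖ Y],
    (∀ f : C →ₗ[Rᵐᵒᵖ] Y, f = 0) → Subsingleton Y

end Semidualizing

end

noncomputable section
section DualityPairs

/-- A class of (bundled) left `R`-modules. -/
abbrev ModClass (R : Type) [Ring R] := Set (ModuleCat.{0} R)

/-- `(M, N)` is a duality pair over `R`: a left `R`-module lies in `M` iff its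
character module lies in `N`, and `N` is closed under direct summands and finite
direct sums. -/
structure IsDualityPair (R : Type) [Ring R] (M : ModClass R) (N : ModClass Rᵐᵒᵖ) : Prop where
  char_mem : ∀ X : ModuleCat.{0} R,
    X ∈ M ↔ ModuleCat.of Rᵐᵒᵖ (CharacterModule X) ∈ N
  summand_closed : ∀ (X Y : ModuleCat.{0} Rᵐᵒᵖ) (i : Y →ₗ[Rᵐᵒᵖ] X) (p : X →ₗ[Rᵐᵒᵖ] Y),
    p.comp i = LinearMap.id → X ∈ N → Y ∈ N
  finsum_closed : ∀ X Y : ModuleCat.{0} Rᵐᵒᵖ,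
    X ∈ N → Y ∈ N → ModuleCat.of Rᵐᵒᵖ (↥X × ↥Y) ∈ N

/-- `(N, M)` is a duality pair over `Rᵒᵖ`: a right `R`-module lies in `N` iff its
character module lies in `M`, and `M` is closed under direct summands and finite
direct sums.  A duality pair `(M, N)` with this additional property is *symmetric*. -/
structure IsDualityPairOp (R : Type) [Ring R] (N : ModClass Rᵐᵒᵖ) (M : ModClass R) : Prop where
  char_mem : ∀ Y : ModuleCat.{0} Rᵐᵒᵖ,
    Y ∈ N ↔ ModuleCat.of R (CharacterModule Y) ∈ M
  summand_closed : ∀ (X Y : ModuleCat.{0} R) (i : Y →ₗ[R] X) (p : X →ₗ[R] Y),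
    p.comp i = LinearMap.id → X ∈ M → Y ∈ M
  finsum_closed : ∀ X Y : ModuleCat.{0} R,
    X ∈ M → Y ∈ M → ModuleCat.of R (↥X × ↥Y) ∈ M

/-- A monomorphism of left `R`-modules is pure if it stays injective after applying
`M ⊗_R -` for every right `R`-module `M`. -/
def IsPureMono (R : Type) [Ring R] {A B : Type} [AddCommGroup A] [Module R A]
    [AddCommGroup B] [Module R B] (f : A →ₗ[R] B) : Prop :=
  Function.Injective f ∧
  ∀ (M : Type) [AddCommGroup M] [Module Rᵐᵒᵖ M],
    Function.Injective (BT.map (M := M) R f)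

end DualityPairs

section Induced
variable (R S : Type) [Ring R] [Ring S]
variable (C : Type) [AddCommGroup C] [Module S C] [Module Rᵐᵒᵖ C]
  [SMulCommClass S Rᵐᵒᵖ C] [SMulCommClass Rᵐᵒᵖ S C]

/-- The induced class `M^C(S)` of left `S`-modules isomorphic to `C ⊗_R A`
with `A` in the Auslander class and in `M`. -/
def inducedMC (Mcl : ModClass R) : ModClass S :=
  {X : ModuleCat.{0} S | ∃ A : ModuleCat.{0} R,
    AuslanderR R S C A ∧ A ∈ Mcl ∧ Nonempty (↥X ≃ₗ[S] BT R C ↥A)}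

/-- The induced class `N^C(Sᵒᵖ)` of right `S`-modules isomorphic to `Hom_{Rᵒᵖ}(C, B)`
with `B` in the Bass class and in `N`. -/
def inducedNC (Ncl : ModClass Rᵐᵒᵖ) : ModClass Sᵐᵒᵖ :=
  {Y : ModuleCat.{0} Sᵐᵒᵖ | ∃ B : ModuleCat.{0} Rᵐᵒᵖ,
    BassOp R S C ↥B ∧ B ∈ Ncl ∧ Nonempty (↥Y ≃ₗ[Sᵐᵒᵖ] (C →ₗ[Rᵐᵒᵖ] ↥B))}

end Induced

section Resolutions
variable (R : Type) [Ring R]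

/-- `ResLen R cl n X` : `X` admits a resolution of length `n` by modules in `cl`. -/
def ResLen (cl : ModClass R) : ℕ → ModuleCat.{0} R → Prop
  | 0, X => X ∈ cl
  | n+1, X => ∃ (Y : ModuleCat.{0} R) (f : ↥Y →ₗ[R] ↥X), Y ∈ cl ∧ Function.Surjective f ∧
      ResLen cl n (ModuleCat.of R (LinearMap.ker f))

/-- `X` has resolution dimension at most `n` with respect to `cl`. -/
def ResDimLE (cl : ModClass R) (n : ℕ) (X : ModuleCat.{0} R) : Prop :=
  ∃ m ≤ n, ResLen R cl m X

/-- `CoresLen R cl n X` : `X` admits a coresolution of length `n` by modules in `cl`. -/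
def CoresLen (cl : ModClass R) : ℕ → ModuleCat.{0} R → Prop
  | 0, X => X ∈ cl
  | n+1, X => ∃ (Y : ModuleCat.{0} R) (f : ↥X →ₗ[R] ↥Y), Y ∈ cl ∧ Function.Injective f ∧
      CoresLen cl n (ModuleCat.of R (↥Y ⧸ LinearMap.range f))

/-- `X` has coresolution dimension at most `n` with respect to `cl`. -/
def CoresDimLE (cl : ModClass R) (n : ℕ) (X : ModuleCat.{0} R) : Prop :=
  ∃ m ≤ n, CoresLen R cl m X

end Resolutions

section Gorenstein
open CategoryTheory
variable (R : Type) [Ring R]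

/-- Exactness of a cochain complex of modules at every spot. -/
def AcyclicComplex (K : CochainComplex (ModuleCat.{0} R) ℤ) : Prop :=
  ∀ n : ℤ, K.ExactAt n

/-- `X` is `(Z, Y)`-Gorenstein injective: `X` is a cycle of an exact complex with
components in `Y` which stays exact under `Hom(Z₀, -)` for every `Z₀ ∈ Z`. -/
def GorInj (Z Y : ModClass R) (X : Type) [AddCommGroup X] [Module R X] : Prop :=
  ∃ K : CochainComplex (ModuleCat.{0} R) ℤ,
    AcyclicComplex R K ∧
    (∀ n : ℤ, K.X n ∈ Y) ∧
    (∀ Z₀ : ModuleCat.{0} R, Z₀ ∈ Z → ∀ n : ℤ,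
      ((((CategoryTheory.preadditiveCoyoneda.obj
        (Opposite.op Z₀)).mapHomologicalComplex _).obj K).ExactAt n)) ∧
    Nonempty (X ≃ₗ[R] LinearMap.ker ((K.d 0 1).hom : ↥(K.X 0) →ₗ[R] ↥(K.X 1)))

end Gorenstein

section GorensteinFlat
open CategoryTheory
variable (S : Type) [Ring S]

/-- `X` is Gorenstein `(Xc, Yc)`-flat : `X` is a cycle of an exact complex with
components in `Xc` which stays exact under `Y₀ ⊗_S -` for every `Y₀ ∈ Yc`. -/
def GorFlat (Xc : ModClass S) (Yc : ModClass Sᵐᵒᵖ) (X : Type) [AddCommGroup X]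
    [Module S X] : Prop :=
  ∃ K : CochainComplex (ModuleCat.{0} S) ℤ,
    AcyclicComplex S K ∧
    (∀ n : ℤ, K.X n ∈ Xc) ∧
    (∀ Y₀ : ModuleCat.{0} Sᵐᵒᵖ, Y₀ ∈ Yc → ∀ n : ℤ,
      ((((btF S ↥Y₀).mapHomologicalComplex _).obj K).ExactAt n)) ∧
    Nonempty (X ≃ₗ[S] LinearMap.ker ((K.d 0 1).hom : ↥(K.X 0) →ₗ[S] ↥(K.X 1)))

end GorensteinFlat

end

noncomputable section
/-- `cl` is closed under extensions. -/
def ExtClosed (R : Type) [Ring R] (cl : ModClass R) : Prop :=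
  ∀ (A B D : Type) [AddCommGroup A] [Module R A] [AddCommGroup B] [Module R B]
    [AddCommGroup D] [Module R D] (f : A →ₗ[R] B) (g : B →ₗ[R] D),
    Function.Injective f → Function.Surjective g →
    LinearMap.range f = LinearMap.ker g →
    ModuleCat.of R A ∈ cl → ModuleCat.of R D ∈ cl → ModuleCat.of R B ∈ cl
end

noncomputable section
/-- Functoriality of the balanced tensor product in the left variable. -/
def BT.mapLeft (R : Type) [Ring R] {M M' : Type} [AddCommGroup M] [Module Rᵐᵒᵖ M]
    [AddCommGroup M'] [Module Rᵐᵒᵖ M'] {N : Type} [AddCommGroup N] [Module R N]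
    (g : M →ₗ[Rᵐᵒᵖ] M') : BT R M N →ₗ[ℤ] BT R M' N := by
  refine Submodule.mapQ _ _
    (TensorProduct.map g.toAddMonoidHom.toIntLinearMap LinearMap.id) ?_
  rw [btRel, Submodule.span_le]
  rintro x ⟨m, r, n, rfl⟩
  have e : TensorProduct.map g.toAddMonoidHom.toIntLinearMap LinearMap.id ((op r • m) ⊗ₜ[ℤ] n - m ⊗ₜ[ℤ] (r • n)) =
      (op r • g m) ⊗ₜ[ℤ] n - g m ⊗ₜ[ℤ] (r • n) := by
    simp [smul_comm]
  exact (congrArg (· ∈ btRel R M' N) e).mpr (Submodule.subset_span ⟨g m, r, n, rfl⟩)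

/-- A left module `F` over a (possibly noncommutative) ring is flat if `- ⊗_R F`
preserves injectivity of maps of right `R`-modules. -/
def IsFlatModule (R : Type) [Ring R] (F : Type) [AddCommGroup F] [Module R F] : Prop :=
  ∀ (M M' : Type) [AddCommGroup M] [Module Rᵐᵒᵖ M] [AddCommGroup M'] [Module Rᵐᵒᵖ M']
    (g : M →ₗ[Rᵐᵒᵖ] M'), Function.Injective g →
    Function.Injective (BT.mapLeft (N := F) R g)
end

/-!
Everything in the statement is invariant under isomorphism: the Auslander and Bass conditions
(Tor and Ext are functors, and the unit `μ` and counit `ν` are natural), and membership in `M`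
and `N` (a module lies in `M` iff its character module lies in `N`, which is closed under
direct summands). What remains is a triangle identity of the adjunction `C ⊗_R - ⊣ Hom_S(C, -)`:
`ν_{C ⊗ A} ∘ (C ⊗ μ_A) = id`, so `ν_{C ⊗ A}` is bijective as soon as `μ_A` is; dually
`Hom(C, ν_B) ∘ μ_{Hom(C, B)} = id`.
-/

noncomputable section

open Function

section BTFunctoriality
variable {R : Type} [Ring R]
  {M M' : Type} [AddCommGroup M] [Module Rᵐᵒᵖ M] [AddCommGroup M'] [Module Rᵐᵒᵖ M']
  {N N' : Type} [AddCommGroup N] [Module R N] [AddCommGroup N'] [Module R N']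

theorem BT.mapLeft_mk (g : M →ₗ[Rᵐᵒᵖ] M') (m : M) (n : N) :
    BT.mapLeft R g (BT.mk R m n) = BT.mk R (g m) n := rfl

def BT.mapAddEquiv (e : N ≃ₗ[R] N') : BT R M N ≃+ BT R M N' where
  toFun := BT.map R e.toLinearMap
  invFun := BT.map R e.symm.toLinearMap
  left_inv x := LinearMap.congr_fun (BT.hom_ext (f := (BT.map R e.symm.toLinearMap).comp
    (BT.map R e.toLinearMap)) (g := LinearMap.id)
    fun m n => congrArg (BT.mk R m) (e.symm_apply_apply n)) x
  right_inv x := LinearMap.congr_fun (BT.hom_ext (f := (BT.map R e.toLinearMap).comp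
    (BT.map R e.symm.toLinearMap)) (g := LinearMap.id)
    fun m n => congrArg (BT.mk R m) (e.apply_symm_apply n)) x
  map_add' := map_add _

def BT.mapLeftAddEquiv (g : M ≃ₗ[Rᵐᵒᵖ] M') : BT R M N ≃+ BT R M' N where
  toFun := BT.mapLeft R g.toLinearMap
  invFun := BT.mapLeft R g.symm.toLinearMap
  left_inv x := LinearMap.congr_fun (BT.hom_ext (f := (BT.mapLeft R g.symm.toLinearMap).comp
    (BT.mapLeft R g.toLinearMap)) (g := LinearMap.id)
    fun m n => congrArg (BT.mk R · n) (g.symm_apply_apply m)) x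
  right_inv x := LinearMap.congr_fun (BT.hom_ext (f := (BT.mapLeft R g.toLinearMap).comp
    (BT.mapLeft R g.symm.toLinearMap)) (g := LinearMap.id)
    fun m n => congrArg (BT.mk R · n) (g.apply_symm_apply m)) x
  map_add' := map_add _

theorem BT.map_smul (T : Type) [Ring T] [Module T M] [SMulCommClass T Rᵐᵒᵖ M]
    (f : N →ₗ[R] N') (t : T) (x : BT R M N) : BT.map R f (t • x) = t • BT.map R f x := by
  induction x using BT.ind with
  | h0 => rw [smul_zero, map_zero, smul_zero]
  | hmk m n => rw [BT.smul_mk, BT.map_mk, BT.map_mk, BT.smul_mk]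
  | hadd x y hx hy => rw [smul_add, map_add, map_add, smul_add, hx, hy]

theorem BT.mapLeft_smul (T : Type) [Ring T] [Module T N] [SMulCommClass T R N]
    (g : M →ₗ[Rᵐᵒᵖ] M') (t : T) (x : BT R M N) :
    BT.mapLeft R g (t • x) = t • BT.mapLeft R g x := by
  induction x using BT.ind with
  | h0 => rw [smul_zero, map_zero, smul_zero]
  | hmk m n => rw [BT.smul_mk_right, BT.mapLeft_mk, BT.mapLeft_mk, BT.smul_mk_right]
  | hadd x y hx hy => rw [smul_add, map_add, map_add, smul_add, hx, hy]

def BT.congrRight (T : Type) [Ring T] [Module T M] [SMulCommClass T Rᵐᵒᵖ M]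
    (e : N ≃ₗ[R] N') : BT R M N ≃ₗ[T] BT R M N' :=
  { BT.mapAddEquiv e with map_smul' := BT.map_smul T e.toLinearMap }

def BT.congrLeft (T : Type) [Ring T] [Module T N] [SMulCommClass T R N]
    (g : M ≃ₗ[Rᵐᵒᵖ] M') : BT R M N ≃ₗ[T] BT R M' N :=
  { BT.mapLeftAddEquiv g with map_smul' := BT.mapLeft_smul T g.toLinearMap }

end BTFunctoriality

def CategoryTheory.NatIso.leftDerived {C D : Type*} [Category C] [Category D] [Abelian C]
    [HasProjectiveResolutions C] [Abelian D] {F G : C ⥤ D} [F.Additive] [G.Additive]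
    (e : F ≅ G) (n : ℕ) : F.leftDerived n ≅ G.leftDerived n where
  hom := NatTrans.leftDerived e.hom n
  inv := NatTrans.leftDerived e.inv n
  hom_inv_id := by rw [← NatTrans.leftDerived_comp, e.hom_inv_id, NatTrans.leftDerived_id]
  inv_hom_id := by rw [← NatTrans.leftDerived_comp, e.inv_hom_id, NatTrans.leftDerived_id]

section TorExtCongr
variable {R : Type} [Ring R]

def btFCongr {M M' : Type} [AddCommGroup M] [Module Rᵐᵒᵖ M] [AddCommGroup M'] [Module Rᵐᵒᵖ M']
    (g : M ≃ₗ[Rᵐᵒᵖ] M') : btF R M ≅ btF R M' :=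
  NatIso.ofComponents (fun N => (BT.mapLeftAddEquiv g).toAddCommGrpIso) fun f => by
    ext x
    exact LinearMap.congr_fun (BT.hom_ext (f := (BT.mapLeft R g.toLinearMap).comp (BT.map R f.hom))
      (g := (BT.map R f.hom).comp (BT.mapLeft R g.toLinearMap)) fun _ _ => rfl) x

def TorGrp.congrRight (M : Type) [AddCommGroup M] [Module Rᵐᵒᵖ M]
    {N N' : Type} [AddCommGroup N] [Module R N] [AddCommGroup N'] [Module R N']
    (e : N ≃ₗ[R] N') (i : ℕ) : TorGrp R M N i ≃+ TorGrp R M N' i :=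
  (((btF R M).leftDerived i).mapIso e.toModuleIso).addCommGroupIsoToAddEquiv

def TorGrp.congrLeft {M M' : Type} [AddCommGroup M] [Module Rᵐᵒᵖ M] [AddCommGroup M']
    [Module Rᵐᵒᵖ M'] (g : M ≃ₗ[Rᵐᵒᵖ] M') (N : Type) [AddCommGroup N] [Module R N] (i : ℕ) :
    TorGrp R M N i ≃+ TorGrp R M' N i :=
  ((NatIso.leftDerived (btFCongr g) i).app (ModuleCat.of R N)).addCommGroupIsoToAddEquiv

def ExtGrp.congrRight (A : Type) [AddCommGroup A] [Module R A]
    {B B' : Type} [AddCommGroup B] [Module R B] [AddCommGroup B'] [Module R B']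
    (e : B ≃ₗ[R] B') (i : ℕ) : ExtGrp R A B i ≃+ ExtGrp R A B' i :=
  ((((Ext ℤ (ModuleCat.{0} R) i).obj (Opposite.op (ModuleCat.of R A))).mapIso
    e.toModuleIso).toLinearEquiv).toAddEquiv

end TorExtCongr

section DualityPair
variable {R : Type} [Ring R]

def CharacterModule.congrOp {X X' : Type} [AddCommGroup X] [Module R X] [AddCommGroup X']
    [Module R X'] (e : X ≃ₗ[R] X') : CharacterModule X' ≃ₗ[Rᵐᵒᵖ] CharacterModule X where
  toFun f := f.comp e.toLinearMap.toAddMonoidHom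
  invFun g := g.comp e.symm.toLinearMap.toAddMonoidHom
  left_inv f := DFunLike.ext _ _ fun a => congrArg f (e.apply_symm_apply a)
  right_inv g := DFunLike.ext _ _ fun a => congrArg g (e.symm_apply_apply a)
  map_add' f g := rfl
  map_smul' r f := DFunLike.ext _ _ fun a => congrArg f (e.map_smul r.unop a).symm

variable {Mcl : ModClass R} {Ncl : ModClass Rᵐᵒᵖ}

theorem IsDualityPair.mem_right_of_linearEquiv (hdp : IsDualityPair R Mcl Ncl) {Y Y' : Type}
    [AddCommGroup Y] [Module Rᵐᵒᵖ Y] [AddCommGroup Y'] [Module Rᵐᵒᵖ Y'] (e : Y ≃ₗ[Rᵐᵒᵖ] Y')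
    (hY : ModuleCat.of Rᵐᵒᵖ Y ∈ Ncl) : ModuleCat.of Rᵐᵒᵖ Y' ∈ Ncl :=
  hdp.summand_closed _ _ e.symm.toLinearMap e.toLinearMap e.comp_symm hY

theorem IsDualityPair.mem_left_of_linearEquiv (hdp : IsDualityPair R Mcl Ncl) {X X' : Type}
    [AddCommGroup X] [Module R X] [AddCommGroup X'] [Module R X'] (e : X ≃ₗ[R] X')
    (hX : ModuleCat.of R X ∈ Mcl) : ModuleCat.of R X' ∈ Mcl :=
  (hdp.char_mem _).2 <|
    hdp.mem_right_of_linearEquiv (CharacterModule.congrOp e.symm) ((hdp.char_mem _).1 hX)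

end DualityPair

section HomCongr
variable (R S : Type) [Ring R] [Ring S]
  (C : Type) [AddCommGroup C] [Module S C] [Module Rᵐᵒᵖ C] [SMulCommClass S Rᵐᵒᵖ C]

def homCongrRight {X X' : Type} [AddCommGroup X] [Module S X] [AddCommGroup X'] [Module S X']
    (e : X ≃ₗ[S] X') : (C →ₗ[S] X) ≃ₗ[R] (C →ₗ[S] X') where
  toFun f := e.toLinearMap.comp f
  invFun g := e.symm.toLinearMap.comp g
  left_inv f := LinearMap.ext fun _ => e.symm_apply_apply _
  right_inv g := LinearMap.ext fun _ => e.apply_symm_apply _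
  map_add' f g := LinearMap.ext fun _ => map_add e _ _
  map_smul' r f := LinearMap.ext fun _ => rfl

def homCongrRightOp {Y Y' : Type} [AddCommGroup Y] [Module Rᵐᵒᵖ Y] [AddCommGroup Y']
    [Module Rᵐᵒᵖ Y'] (e : Y ≃ₗ[Rᵐᵒᵖ] Y') : (C →ₗ[Rᵐᵒᵖ] Y) ≃ₗ[Sᵐᵒᵖ] (C →ₗ[Rᵐᵒᵖ] Y') where
  toFun f := e.toLinearMap.comp f
  invFun g := e.symm.toLinearMap.comp g
  left_inv f := LinearMap.ext fun _ => e.symm_apply_apply _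
  right_inv g := LinearMap.ext fun _ => e.apply_symm_apply _
  map_add' f g := LinearMap.ext fun _ => map_add e _ _
  map_smul' s f := LinearMap.ext fun _ => rfl

end HomCongr

section Foxby
variable (R S : Type) [Ring R] [Ring S]
  (C : Type) [AddCommGroup C] [Module S C] [Module Rᵐᵒᵖ C]
  [SMulCommClass S Rᵐᵒᵖ C] [SMulCommClass Rᵐᵒᵖ S C]

def muRLinear (A : Type) [AddCommGroup A] [Module R A] : A →ₗ[R] (C →ₗ[S] BT R C A) where
  toFun := muR R S C A
  map_add' a a' := LinearMap.ext fun c => BT.mk_add_right c a a'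
  map_smul' r a := LinearMap.ext fun c => (BT.mk_rel c r a).symm

theorem nuS_zero (X : Type) [AddCommGroup X] [Module S X] : nuS R S C X 0 = 0 := by
  unfold nuS
  exact map_zero _

theorem nuS_add (X : Type) [AddCommGroup X] [Module S X] (x y : BT R C (C →ₗ[S] X)) :
    nuS R S C X (x + y) = nuS R S C X x + nuS R S C X y := by
  unfold nuS
  exact map_add _ x y

theorem nuOp_zero (B : Type) [AddCommGroup B] [Module Rᵐᵒᵖ B] : nuOp R S C B 0 = 0 := by
  unfold nuOp
  exact map_zero _

theorem nuOp_add (B : Type) [AddCommGroup B] [Module Rᵐᵒᵖ B] (x y : BT S (C →ₗ[Rᵐᵒᵖ] B) C) :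
    nuOp R S C B (x + y) = nuOp R S C B x + nuOp R S C B y := by
  unfold nuOp
  exact map_add _ x y

theorem nuOp_smul (B : Type) [AddCommGroup B] [Module Rᵐᵒᵖ B] (r : Rᵐᵒᵖ)
    (x : BT S (C →ₗ[Rᵐᵒᵖ] B) C) : nuOp R S C B (r • x) = r • nuOp R S C B x := by
  induction x using BT.ind with
  | h0 => rw [smul_zero, nuOp_zero, smul_zero]
  | hmk f c => exact f.map_smul r c
  | hadd x y hx hy => rw [smul_add, nuOp_add, nuOp_add, smul_add, hx, hy]

def nuOpLinear (B : Type) [AddCommGroup B] [Module Rᵐᵒᵖ B] :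
    BT S (C →ₗ[Rᵐᵒᵖ] B) C →ₗ[Rᵐᵒᵖ] B where
  toFun := nuOp R S C B
  map_add' := nuOp_add R S C B
  map_smul' := nuOp_smul R S C B

variable {R S C}

theorem muR_comp_linearEquiv {A A' : Type} [AddCommGroup A] [Module R A] [AddCommGroup A']
    [Module R A'] (e : A ≃ₗ[R] A') :
    muR R S C A' ∘ e = homCongrRight R S C (BT.congrRight S e) ∘ muR R S C A :=
  funext fun _ => LinearMap.ext fun _ => rfl

theorem linearEquiv_comp_nuS {X X' : Type} [AddCommGroup X] [Module S X] [AddCommGroup X']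
    [Module S X'] (e : X ≃ₗ[S] X') :
    e ∘ nuS R S C X = nuS R S C X' ∘ BT.mapAddEquiv (homCongrRight R S C e) := by
  funext x
  induction x using BT.ind with
  | h0 => simp only [comp_apply, nuS_zero, map_zero]
  | hmk c f => rfl
  | hadd x y hx hy => simp only [comp_apply, nuS_add, map_add] at hx hy ⊢; rw [hx, hy]

theorem muOp_comp_linearEquiv {Y Y' : Type} [AddCommGroup Y] [Module Sᵐᵒᵖ Y] [AddCommGroup Y']
    [Module Sᵐᵒᵖ Y'] (e : Y ≃ₗ[Sᵐᵒᵖ] Y') :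
    muOp R S C Y' ∘ e = homCongrRightOp R S C (BT.congrLeft Rᵐᵒᵖ e) ∘ muOp R S C Y :=
  funext fun _ => LinearMap.ext fun _ => rfl

theorem linearEquiv_comp_nuOp {B B' : Type} [AddCommGroup B] [Module Rᵐᵒᵖ B] [AddCommGroup B']
    [Module Rᵐᵒᵖ B'] (e : B ≃ₗ[Rᵐᵒᵖ] B') :
    e ∘ nuOp R S C B = nuOp R S C B' ∘ BT.mapLeftAddEquiv (homCongrRightOp R S C e) := by
  funext x
  induction x using BT.ind with
  | h0 => simp only [comp_apply, nuOp_zero, map_zero]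
  | hmk f c => rfl
  | hadd x y hx hy => simp only [comp_apply, nuOp_add, map_add] at hx hy ⊢; rw [hx, hy]


section Transport
variable {A A' : Type} [AddCommGroup A] [Module R A] [AddCommGroup A'] [Module R A']
  {X X' : Type} [AddCommGroup X] [Module S X] [AddCommGroup X'] [Module S X']
  {Y Y' : Type} [AddCommGroup Y] [Module Sᵐᵒᵖ Y] [AddCommGroup Y'] [Module Sᵐᵒᵖ Y']
  {B B' : Type} [AddCommGroup B] [Module Rᵐᵒᵖ B] [AddCommGroup B'] [Module Rᵐᵒᵖ B']

theorem bijective_muR_iff (e : A ≃ₗ[R] A') :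
    Bijective (muR R S C A) ↔ Bijective (muR R S C A') := by
  rw [← (homCongrRight R S C (BT.congrRight S e)).toEquiv.comp_bijective (muR R S C A),
    ← e.toEquiv.bijective_comp (muR R S C A')]
  exact Iff.of_eq (congrArg Bijective (muR_comp_linearEquiv e).symm)

theorem bijective_nuS_iff (e : X ≃ₗ[S] X') :
    Bijective (nuS R S C X) ↔ Bijective (nuS R S C X') := by
  rw [← e.toEquiv.comp_bijective (nuS R S C X),
    ← (BT.mapAddEquiv (homCongrRight R S C e)).toEquiv.bijective_comp (nuS R S C X')]
  exact Iff.of_eq (congrArg Bijective (linearEquiv_comp_nuS e))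

theorem bijective_muOp_iff (e : Y ≃ₗ[Sᵐᵒᵖ] Y') :
    Bijective (muOp R S C Y) ↔ Bijective (muOp R S C Y') := by
  rw [← (homCongrRightOp R S C (BT.congrLeft Rᵐᵒᵖ e)).toEquiv.comp_bijective (muOp R S C Y),
    ← e.toEquiv.bijective_comp (muOp R S C Y')]
  exact Iff.of_eq (congrArg Bijective (muOp_comp_linearEquiv e).symm)

theorem bijective_nuOp_iff (e : B ≃ₗ[Rᵐᵒᵖ] B') :
    Bijective (nuOp R S C B) ↔ Bijective (nuOp R S C B') := by
  rw [← e.toEquiv.comp_bijective (nuOp R S C B),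
    ← (BT.mapLeftAddEquiv (homCongrRightOp R S C e)).toEquiv.bijective_comp (nuOp R S C B')]
  exact Iff.of_eq (congrArg Bijective (linearEquiv_comp_nuOp e))

theorem AuslanderR.of_linearEquiv (e : A ≃ₗ[R] A') (hA : AuslanderR R S C A) :
    AuslanderR R S C A' :=
  ⟨fun i hi => (TorGrp.congrRight C e i).toEquiv.subsingleton_congr.1 (hA.1 i hi),
    fun i hi => (ExtGrp.congrRight C (BT.congrRight S e) i).toEquiv.subsingleton_congr.1
      (hA.2.1 i hi),
    (bijective_muR_iff e).1 hA.2.2⟩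

theorem BassOp.of_linearEquiv (e : B ≃ₗ[Rᵐᵒᵖ] B') (hB : BassOp R S C B) : BassOp R S C B' :=
  ⟨fun i hi => (ExtGrp.congrRight C e i).toEquiv.subsingleton_congr.1 (hB.1 i hi),
    fun i hi => (TorGrp.congrLeft (homCongrRightOp R S C e) C i).toEquiv.subsingleton_congr.1
      (hB.2.1 i hi),
    (bijective_nuOp_iff e).1 hB.2.2⟩

end Transport

theorem nuS_map_muR (A : Type) [AddCommGroup A] [Module R A] (t : BT R C A) :
    nuS R S C (BT R C A) (BT.map R (muRLinear R S C A) t) = t := by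
  induction t using BT.ind with
  | h0 => rw [map_zero, nuS_zero]
  | hmk c a => rfl
  | hadd x y hx hy => rw [map_add, nuS_add, hx, hy]

theorem bijective_nuS_of_bijective_muR {A : Type} [AddCommGroup A] [Module R A]
    (h : Bijective (muR R S C A)) : Bijective (nuS R S C (BT R C A)) := by
  let φ := BT.mapAddEquiv (M := C) (LinearEquiv.ofBijective (muRLinear R S C A) h)
  have hφ : nuS R S C (BT R C A) ∘ φ = id := funext (nuS_map_muR A)
  rw [← φ.toEquiv.bijective_comp]
  exact hφ ▸ bijective_id

theorem nuOp_comp_muOp (B : Type) [AddCommGroup B] [Module Rᵐᵒᵖ B] (f : C →ₗ[Rᵐᵒᵖ] B) :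
    (nuOpLinear R S C B).comp (muOp R S C (C →ₗ[Rᵐᵒᵖ] B) f) = f :=
  LinearMap.ext fun _ => rfl

theorem bijective_muOp_of_bijective_nuOp {B : Type} [AddCommGroup B] [Module Rᵐᵒᵖ B]
    (h : Bijective (nuOp R S C B)) : Bijective (muOp R S C (C →ₗ[Rᵐᵒᵖ] B)) := by
  let ψ := homCongrRightOp R S C (LinearEquiv.ofBijective (nuOpLinear R S C B) h)
  have hψ : ψ ∘ muOp R S C (C →ₗ[Rᵐᵒᵖ] B) = id := funext (nuOp_comp_muOp B)
  rw [← ψ.toEquiv.comp_bijective]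
  exact hψ ▸ bijective_id

end Foxby

end

theorem stmt12_general (R S : Type) [Ring R] [Ring S]
    (C : Type) [AddCommGroup C] [Module S C] [Module Rᵐᵒᵖ C]
    [SMulCommClass S Rᵐᵒᵖ C] [SMulCommClass Rᵐᵒᵖ S C]
    (Mcl : ModClass R) (Ncl : ModClass Rᵐᵒᵖ) (hdp : IsDualityPair R Mcl Ncl) :
    (∀ A : ModuleCat.{0} R, AuslanderR R S C ↥A → A ∈ Mcl →
      ModuleCat.of S (BT R C ↥A) ∈ inducedMC R S C Mcl ∧
      Function.Bijective (muR R S C ↥A)) ∧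
    (∀ X : ModuleCat.{0} S, X ∈ inducedMC R S C Mcl →
      AuslanderR R S C (C →ₗ[S] ↥X) ∧ ModuleCat.of R (C →ₗ[S] ↥X) ∈ Mcl ∧
      Function.Bijective (nuS R S C ↥X)) ∧
    (∀ Y : ModuleCat.{0} Sᵐᵒᵖ, Y ∈ inducedNC R S C Ncl →
      BassOp R S C (BT S ↥Y C) ∧ ModuleCat.of Rᵐᵒᵖ (BT S ↥Y C) ∈ Ncl ∧
      Function.Bijective (muOp R S C ↥Y)) ∧
    (∀ B : ModuleCat.{0} Rᵐᵒᵖ, BassOp R S C ↥B → B ∈ Ncl →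
      ModuleCat.of Sᵐᵒᵖ (C →ₗ[Rᵐᵒᵖ] ↥B) ∈ inducedNC R S C Ncl ∧
      Function.Bijective (nuOp R S C ↥B)) := by
  refine ⟨fun A hA hAM => ⟨⟨A, hA, hAM, ⟨LinearEquiv.refl S _⟩⟩, hA.2.2⟩, ?_, ?_,
    fun B hB hBN => ⟨⟨B, hB, hBN, ⟨LinearEquiv.refl Sᵐᵒᵖ _⟩⟩, hB.2.2⟩⟩
  · rintro X ⟨A, hA, hAM, ⟨e⟩⟩
    let ρ : A ≃ₗ[R] (C →ₗ[S] X) :=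
      (LinearEquiv.ofBijective (muRLinear R S C A) hA.2.2).trans (homCongrRight R S C e.symm)
    exact ⟨hA.of_linearEquiv ρ, hdp.mem_left_of_linearEquiv ρ hAM,
      (bijective_nuS_iff e.symm).1 (bijective_nuS_of_bijective_muR hA.2.2)⟩
  · rintro Y ⟨B, hB, hBN, ⟨e⟩⟩
    let φ : BT S Y C ≃ₗ[Rᵐᵒᵖ] B :=
      (BT.congrLeft Rᵐᵒᵖ e).trans (LinearEquiv.ofBijective (nuOpLinear R S C B) hB.2.2)
    exact ⟨hB.of_linearEquiv φ.symm, hdp.mem_right_of_linearEquiv φ.symm hBN,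
      (bijective_muOp_iff e.symm).1 (bijective_muOp_of_bijective_nuOp hB.2.2)⟩

/-- The restricted Foxby equivalences: `C ⊗_R -` is an equivalence from
`A_C(R) ∩ M` to `M^C(S)` with quasi-inverse `Hom_S(C, -)`, and `- ⊗_S C` is an
equivalence from `N^C(Sᵒᵖ)` to `B_C(Rᵒᵖ) ∩ N` with quasi-inverse `Hom_{Rᵒᵖ}(C, -)`,
expressed on objects with unit and counit bijective. -/
theorem stmt12 (R S : Type) [Ring R] [Ring S]
    (C : Type) [AddCommGroup C] [Module S C] [Module Rᵐᵒᵖ C]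
    [SMulCommClass S Rᵐᵒᵖ C] [SMulCommClass Rᵐᵒᵖ S C]
    (hC : IsSemidualizing R S C)
    (Mcl : ModClass R) (Ncl : ModClass Rᵐᵒᵖ) (hdp : IsDualityPair R Mcl Ncl) :
    (∀ A : ModuleCat.{0} R, AuslanderR R S C ↥A → A ∈ Mcl →
      ModuleCat.of S (BT R C ↥A) ∈ inducedMC R S C Mcl ∧
      Function.Bijective (muR R S C ↥A)) ∧
    (∀ X : ModuleCat.{0} S, X ∈ inducedMC R S C Mcl →
      AuslanderR R S C (C →ₗ[S] ↥X) ∧ ModuleCat.of R (C →ₗ[S] ↥X) ∈ Mcl ∧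
      Function.Bijective (nuS R S C ↥X)) ∧
    (∀ Y : ModuleCat.{0} Sᵐᵒᵖ, Y ∈ inducedNC R S C Ncl →
      BassOp R S C (BT S ↥Y C) ∧ ModuleCat.of Rᵐᵒᵖ (BT S ↥Y C) ∈ Ncl ∧
      Function.Bijective (muOp R S C ↥Y)) ∧
    (∀ B : ModuleCat.{0} Rᵐᵒᵖ, BassOp R S C ↥B → B ∈ Ncl →
      ModuleCat.of Sᵐᵒᵖ (C →ₗ[Rᵐᵒᵖ] ↥B) ∈ inducedNC R S C Ncl ∧
      Function.Bijective (nuOp R S C ↥B)) :=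
  stmt12_general R S C Mcl Ncl hdp
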